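/- arXiv:2306.01726 — 4 statements merged into one kernel-verified Lean document; each statement's English description precedes it below -/
import Mathlib

section
/- If three binary classifiers have all pair and triple correlations zero on both labels, then each decision-event frequency satisfies the independent generating polynomial; for example f_{α,β,α} = P_α·P_{1,α}(1−P_{2,α})P_{3,α} + (1−P_α)(1−P_{1,β})P_{2,β}(1−P_{3,β}). -/
open Finset

noncomputable section

/-- number of items with true label `l` -/
def nLabel {S : Type} [Fintype S] (truelabel : S → Bool) (l : Bool) : ℕ :=
  (univ.filter fun s => truelabel s = l).card

/-- prevalence P_α of label α (= `true`) -/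
def prevAlpha {S : Type} [Fintype S] (truelabel : S → Bool) : ℝ :=
  (nLabel truelabel true : ℝ) / (Fintype.card S : ℝ)

/-- label accuracy P_{i,ℓ} of classifier `d` on items of true label `l` -/
def acc {S : Type} [Fintype S] (truelabel d : S → Bool) (l : Bool) : ℝ :=
  ((univ.filter fun s => truelabel s = l ∧ d s = l).card : ℝ) / (nLabel truelabel l : ℝ)

/-- correctness indicator 𝟙_i(s) of classifier `d` on item `s` -/
def ind {S : Type} (truelabel d : S → Bool) (s : S) : ℝ :=
  if d s = truelabel s then 1 else 0

/-- pair decision correlation Γ_{i,j,ℓ} -/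
def pairCorr {S : Type} [Fintype S] (truelabel di dj : S → Bool) (l : Bool) : ℝ :=
  (1 / (nLabel truelabel l : ℝ)) *
    ∑ s ∈ univ.filter (fun s => truelabel s = l),
      (ind truelabel di s - acc truelabel di l) * (ind truelabel dj s - acc truelabel dj l)

/-- 3-way decision correlation Γ_{i,j,k,ℓ} -/
def tripleCorr {S : Type} [Fintype S] (truelabel di dj dk : S → Bool) (l : Bool) : ℝ :=
  (1 / (nLabel truelabel l : ℝ)) *
    ∑ s ∈ univ.filter (fun s => truelabel s = l),
      (ind truelabel di s - acc truelabel di l) * (ind truelabel dj s - acc truelabel dj l) *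
        (ind truelabel dk s - acc truelabel dk l)

/-- decision-event frequency f_{ℓ₁,ℓ₂,ℓ₃} -/
def freq3 {S : Type} [Fintype S] (d₁ d₂ d₃ : S → Bool) (l₁ l₂ l₃ : Bool) : ℝ :=
  ((univ.filter fun s => d₁ s = l₁ ∧ d₂ s = l₂ ∧ d₃ s = l₃).card : ℝ) / (Fintype.card S : ℝ)

/-- marginal vote frequency f_{i,ℓ} -/
def freq1 {S : Type} [Fintype S] (d : S → Bool) (l : Bool) : ℝ :=
  ((univ.filter fun s => d s = l).card : ℝ) / (Fintype.card S : ℝ)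

/-- pair vote frequency f_{i,j,ℓ} -/
def freq2 {S : Type} [Fintype S] (di dj : S → Bool) (l : Bool) : ℝ :=
  ((univ.filter fun s => di s = l ∧ dj s = l).card : ℝ) / (Fintype.card S : ℝ)

end

/-!
On the items of true label `ℓ`, the indicator that classifier `i` votes `b` is
`P ± (𝟙ᵢ - P_{i,ℓ})`, with `P = P_{i,ℓ}` and sign `+` if `b = ℓ`, and `P = 1 - P_{i,ℓ}` and
sign `-` otherwise. Expanding the product of three such indicators, every term with a centred
factor sums to zero over the label class, because centred indicators have mean zero and the pair
and triple correlations vanish. So the items of label `ℓ` with a given decision pattern number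
`n_ℓ` times the product of the factors, and summing over both labels gives the polynomial.
-/

theorem Finset.sum_affine_mul_affine_mul_affine {ι R : Type*} [CommRing R] (A : Finset ι)
    (e₁ e₂ e₃ : ι → R) (m₁ m₂ m₃ σ₁ σ₂ σ₃ : R)
    (h₁ : ∑ s ∈ A, e₁ s = 0) (h₂ : ∑ s ∈ A, e₂ s = 0) (h₃ : ∑ s ∈ A, e₃ s = 0)
    (h₁₂ : ∑ s ∈ A, e₁ s * e₂ s = 0) (h₁₃ : ∑ s ∈ A, e₁ s * e₃ s = 0)
    (h₂₃ : ∑ s ∈ A, e₂ s * e₃ s = 0) (h₁₂₃ : ∑ s ∈ A, e₁ s * e₂ s * e₃ s = 0) :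
    ∑ s ∈ A, (m₁ + σ₁ * e₁ s) * (m₂ + σ₂ * e₂ s) * (m₃ + σ₃ * e₃ s) = A.card * (m₁ * m₂ * m₃) := by
  have expand : ∀ s, (m₁ + σ₁ * e₁ s) * (m₂ + σ₂ * e₂ s) * (m₃ + σ₃ * e₃ s)
      = m₁ * m₂ * m₃ + m₂ * m₃ * σ₁ * e₁ s + m₁ * m₃ * σ₂ * e₂ s + m₁ * m₂ * σ₃ * e₃ s
        + m₃ * σ₁ * σ₂ * (e₁ s * e₂ s) + m₂ * σ₁ * σ₃ * (e₁ s * e₃ s)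
        + m₁ * σ₂ * σ₃ * (e₂ s * e₃ s) + σ₁ * σ₂ * σ₃ * (e₁ s * e₂ s * e₃ s) := fun s => by ring
  simp only [expand, sum_add_distrib, ← mul_sum, h₁, h₂, h₃, h₁₂, h₁₃, h₂₃, h₁₂₃, mul_zero,
    add_zero, sum_const, nsmul_eq_mul]
  ring

theorem Finset.sum_eq_zero_of_inv_card_mul_sum_eq_zero {ι : Type*} {A : Finset ι} {f : ι → ℝ}
    (h : 1 / (A.card : ℝ) * ∑ s ∈ A, f s = 0) : ∑ s ∈ A, f s = 0 := by
  rcases mul_eq_zero.mp h with hcard | hsum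
  · simp_all
  · exact hsum

noncomputable section Classifiers

variable {S : Type} [Fintype S] (t : S → Bool)

def labelClass (l : Bool) : Finset S := univ.filter fun s => t s = l

/-- The factor `P_{d,l}` or `1 - P_{d,l}` of the generating polynomial for a vote `b` on
label `l`. -/
def voteProb (d : S → Bool) (l b : Bool) : ℝ := if b = l then acc t d l else 1 - acc t d l

variable {t}

theorem nLabel_eq_card_labelClass (l : Bool) : nLabel t l = #(labelClass t l) := rfl

theorem sum_ind_sub_acc_eq_zero (d : S → Bool) (l : Bool) :
    ∑ s ∈ labelClass t l, (ind t d s - acc t d l) = 0 := by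
  set correct := univ.filter fun s => t s = l ∧ d s = l
  have hsum : ∑ s ∈ labelClass t l, ind t d s = #correct := by
    rw [labelClass, sum_filter, natCast_card_filter]
    refine sum_congr rfl fun s _ => ?_
    by_cases hl : t s = l <;> simp [ind, hl, eq_comm]
  have hle : #correct ≤ nLabel t l := card_le_card fun s hs => by simp_all [correct]
  -- an empty label class gives `acc` the junk value `0 / 0`, which `mul_div_cancel_of_imp'` absorbs
  rw [sum_sub_distrib, hsum, sum_const, nsmul_eq_mul, acc, ← nLabel_eq_card_labelClass,
    mul_div_cancel_of_imp', sub_self]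
  intro hn
  exact_mod_cast Nat.le_zero.mp (hle.trans_eq (by exact_mod_cast hn))

theorem vote_indicator_eq {d : S → Bool} {l : Bool} (b : Bool) {s : S} (hs : t s = l) :
    (if d s = b then (1 : ℝ) else 0)
      = voteProb t d l b + (if b = l then 1 else -1) * (ind t d s - acc t d l) := by
  cases b <;> cases l <;> cases hd : d s <;> simp [voteProb, ind, hd, hs]

theorem card_labelClass_votes_eq (d₁ d₂ d₃ : S → Bool) (l b₁ b₂ b₃ : Bool)
    (h₁₂ : pairCorr t d₁ d₂ l = 0) (h₁₃ : pairCorr t d₁ d₃ l = 0)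
    (h₂₃ : pairCorr t d₂ d₃ l = 0) (h₁₂₃ : tripleCorr t d₁ d₂ d₃ l = 0) :
    (#{s ∈ labelClass t l | d₁ s = b₁ ∧ d₂ s = b₂ ∧ d₃ s = b₃} : ℝ)
      = nLabel t l * (voteProb t d₁ l b₁ * voteProb t d₂ l b₂ * voteProb t d₃ l b₃) := by
  have hprod : ∀ s ∈ labelClass t l, (if d₁ s = b₁ ∧ d₂ s = b₂ ∧ d₃ s = b₃ then (1 : ℝ) else 0)
      = (voteProb t d₁ l b₁ + (if b₁ = l then 1 else -1) * (ind t d₁ s - acc t d₁ l))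
        * (voteProb t d₂ l b₂ + (if b₂ = l then 1 else -1) * (ind t d₂ s - acc t d₂ l))
        * (voteProb t d₃ l b₃ + (if b₃ = l then 1 else -1) * (ind t d₃ s - acc t d₃ l)) := by
    intro s hs
    have hl : t s = l := (mem_filter.mp hs).2
    rw [← vote_indicator_eq b₁ hl, ← vote_indicator_eq b₂ hl, ← vote_indicator_eq b₃ hl]
    simp only [ite_zero_mul_ite_zero, mul_one, and_assoc]
  rw [natCast_card_filter, sum_congr rfl hprod, nLabel_eq_card_labelClass,
    sum_affine_mul_affine_mul_affine _ _ _ _ _ _ _ _ _ _ (sum_ind_sub_acc_eq_zero d₁ l)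
      (sum_ind_sub_acc_eq_zero d₂ l) (sum_ind_sub_acc_eq_zero d₃ l)
      (sum_eq_zero_of_inv_card_mul_sum_eq_zero h₁₂) (sum_eq_zero_of_inv_card_mul_sum_eq_zero h₁₃)
      (sum_eq_zero_of_inv_card_mul_sum_eq_zero h₂₃)
      (sum_eq_zero_of_inv_card_mul_sum_eq_zero h₁₂₃)]

theorem card_filter_eq_add_labelClass (p : S → Prop) [DecidablePred p] :
    #(univ.filter p) = #((labelClass t true).filter p) + #((labelClass t false).filter p) := by
  rw [← card_filter_add_card_filter_not (s := univ.filter p) (p := fun s => t s = true)]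
  simp only [labelClass, filter_comm p, Bool.not_eq_true]

theorem freq3_eq_of_uncorrelated [Nonempty S] (d₁ d₂ d₃ : S → Bool) (b₁ b₂ b₃ : Bool)
    (h₁₂ : ∀ l, pairCorr t d₁ d₂ l = 0) (h₁₃ : ∀ l, pairCorr t d₁ d₃ l = 0)
    (h₂₃ : ∀ l, pairCorr t d₂ d₃ l = 0) (h₁₂₃ : ∀ l, tripleCorr t d₁ d₂ d₃ l = 0) :
    freq3 d₁ d₂ d₃ b₁ b₂ b₃
      = prevAlpha t * (voteProb t d₁ true b₁ * voteProb t d₂ true b₂ * voteProb t d₃ true b₃)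
        + (1 - prevAlpha t)
          * (voteProb t d₁ false b₁ * voteProb t d₂ false b₂ * voteProb t d₃ false b₃) := by
  have hN : (Fintype.card S : ℝ) ≠ 0 := Nat.cast_ne_zero.mpr Fintype.card_ne_zero
  have hlabels : nLabel t true + nLabel t false = Fintype.card S := by
    simpa [nLabel_eq_card_labelClass] using
      (card_filter_eq_add_labelClass (t := t) fun _ => True).symm
  rw [freq3, prevAlpha, one_sub_div hN, ← hlabels, card_filter_eq_add_labelClass (t := t),
    Nat.cast_add,
    card_labelClass_votes_eq d₁ d₂ d₃ true b₁ b₂ b₃ (h₁₂ _) (h₁₃ _) (h₂₃ _) (h₁₂₃ _),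
    card_labelClass_votes_eq d₁ d₂ d₃ false b₁ b₂ b₃ (h₁₂ _) (h₁₃ _) (h₂₃ _) (h₁₂₃ _)]
  push_cast
  ring

end Classifiers

theorem independent_freq_alpha_beta_alpha_general
    (S : Type) [Fintype S] (truelabel d₁ d₂ d₃ : S → Bool)
    (hα : ∃ s, truelabel s = true)
    (h12 : ∀ l, pairCorr truelabel d₁ d₂ l = 0)
    (h13 : ∀ l, pairCorr truelabel d₁ d₃ l = 0)
    (h23 : ∀ l, pairCorr truelabel d₂ d₃ l = 0)
    (h123 : ∀ l, tripleCorr truelabel d₁ d₂ d₃ l = 0) :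
    freq3 d₁ d₂ d₃ true false true =
      prevAlpha truelabel * acc truelabel d₁ true * (1 - acc truelabel d₂ true) *
          acc truelabel d₃ true +
        (1 - prevAlpha truelabel) * (1 - acc truelabel d₁ false) * acc truelabel d₂ false *
          (1 - acc truelabel d₃ false) := by
  have : Nonempty S := hα.nonempty
  rw [freq3_eq_of_uncorrelated d₁ d₂ d₃ true false true h12 h13 h23 h123]
  simp only [voteProb, if_true, if_false, Bool.false_eq_true, Bool.true_eq_false]
  ring

/-- Theorem 1 instance (independent generating polynomial for the pattern (α,β,α)):
if all pair and triple correlations vanish on both labels, then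
f_{α,β,α} = P_α·P_{1,α}(1−P_{2,α})P_{3,α} + (1−P_α)(1−P_{1,β})P_{2,β}(1−P_{3,β}). -/
theorem independent_freq_alpha_beta_alpha
    (S : Type) [Fintype S] (truelabel d₁ d₂ d₃ : S → Bool)
    (hα : ∃ s, truelabel s = true) (hβ : ∃ s, truelabel s = false)
    (h12 : ∀ l, pairCorr truelabel d₁ d₂ l = 0)
    (h13 : ∀ l, pairCorr truelabel d₁ d₃ l = 0)
    (h23 : ∀ l, pairCorr truelabel d₂ d₃ l = 0)
    (h123 : ∀ l, tripleCorr truelabel d₁ d₂ d₃ l = 0) :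
    freq3 d₁ d₂ d₃ true false true =
      prevAlpha truelabel * acc truelabel d₁ true * (1 - acc truelabel d₂ true) *
          acc truelabel d₃ true +
        (1 - prevAlpha truelabel) * (1 - acc truelabel d₁ false) * acc truelabel d₂ false *
          (1 - acc truelabel d₃ false) :=
  independent_freq_alpha_beta_alpha_general S truelabel d₁ d₂ d₃ hα h12 h13 h23 h123
end

section
/- For two arbitrarily correlated binary classifiers, the agreement rate satisfies a_{i,j} = P_α(P_{i,α}P_{j,α} + (1−P_{i,α})(1−P_{j,α}) + 2Γ_{i,j,α}) + (1−P_α)(P_{i,β}P_{j,β} + (1−P_{i,β})(1−P_{j,β}) + 2Γ_{i,j,β}). -/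
open Finset

/-!
An item is agreed on exactly when the two correctness indicators coincide, and for `{0,1}`-valued
`x, y` that is `x y + (1 - x)(1 - y)`. Averaging this over the items of one true label and
centring `x, y` at their means (the label accuracies) gives `P_i P_j + (1 - P_i)(1 - P_j) + 2Γ`,
the covariance term appearing once from each product. Weighting the two labels by their
prevalences recovers the overall agreement rate.
-/

theorem Finset.sum_mul_add_one_sub_mul_one_sub {ι R : Type*} [CommRing R] (F : Finset ι)
    (f g : ι → R) {a b : R} (ha : ∑ i ∈ F, f i = #F * a) (hb : ∑ i ∈ F, g i = #F * b) :
    ∑ i ∈ F, (f i * g i + (1 - f i) * (1 - g i)) =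
      #F * (a * b + (1 - a) * (1 - b)) + 2 * ∑ i ∈ F, (f i - a) * (g i - b) := by
  simp only [mul_sub, sub_mul, one_mul, mul_one, sum_add_distrib, sum_sub_distrib, ← mul_sum,
    ← sum_mul, sum_const, nsmul_eq_mul, ha, hb]
  ring

section Classifiers

variable {S : Type}

theorem ind_mul_add_one_sub_mul_one_sub (truelabel di dj : S → Bool) (s : S) :
    ind truelabel di s * ind truelabel dj s + (1 - ind truelabel di s) * (1 - ind truelabel dj s) =
      if di s = dj s then 1 else 0 := by
  unfold ind
  cases di s <;> cases dj s <;> cases truelabel s <;> norm_num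

theorem card_eq_card_filter_true_add_card_filter_false (truelabel : S → Bool) (t : Finset S) :
    #t = #(t.filter fun s => truelabel s = true) + #(t.filter fun s => truelabel s = false) := by
  simpa only [Bool.not_eq_true] using (card_filter_add_card_filter_not (s := t)
    (fun s => truelabel s = true)).symm

variable [Fintype S]

theorem sum_ind_eq_nLabel_mul_acc (truelabel d : S → Bool) (l : Bool)
    (hl : (nLabel truelabel l : ℝ) ≠ 0) :
    ∑ s ∈ univ.filter (fun s => truelabel s = l), ind truelabel d s =
      nLabel truelabel l * acc truelabel d l := by
  have hind : ∀ s ∈ univ.filter (fun s => truelabel s = l),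
      ind truelabel d s = if d s = l then 1 else 0 := by
    intro s hs
    rw [ind, (mem_filter.1 hs).2]
  rw [sum_congr rfl hind, sum_boole, filter_filter, acc, mul_div_cancel₀ _ hl]

theorem nLabel_mul_agreement_eq_card (truelabel di dj : S → Bool) (l : Bool) :
    (nLabel truelabel l : ℝ) *
        (acc truelabel di l * acc truelabel dj l +
          (1 - acc truelabel di l) * (1 - acc truelabel dj l) + 2 * pairCorr truelabel di dj l) =
      #((univ.filter fun s => di s = dj s).filter fun s => truelabel s = l) := by
  have hcount : (#((univ.filter fun s => di s = dj s).filter fun s => truelabel s = l) : ℝ) =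
      ∑ s ∈ univ.filter (fun s => truelabel s = l), (ind truelabel di s * ind truelabel dj s +
        (1 - ind truelabel di s) * (1 - ind truelabel dj s)) := by
    rw [sum_congr rfl fun s _ => ind_mul_add_one_sub_mul_one_sub truelabel di dj s, sum_boole,
      filter_filter, filter_filter]
    simp only [and_comm]
  rcases eq_or_ne (nLabel truelabel l : ℝ) 0 with hl | hl
  · have hempty : univ.filter (fun s => truelabel s = l) = ∅ :=
      card_eq_zero.1 (by exact_mod_cast hl)
    rw [hcount, hempty, hl, zero_mul, sum_empty]
  · rw [hcount, sum_mul_add_one_sub_mul_one_sub _ _ _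
      (sum_ind_eq_nLabel_mul_acc truelabel di l hl) (sum_ind_eq_nLabel_mul_acc truelabel dj l hl),
      pairCorr, ← nLabel]
    field_simp

theorem one_sub_prevAlpha (truelabel : S → Bool) (hS : (Fintype.card S : ℝ) ≠ 0) :
    1 - prevAlpha truelabel = nLabel truelabel false / Fintype.card S := by
  have hsplit : (Fintype.card S : ℝ) = nLabel truelabel true + nLabel truelabel false := by
    exact_mod_cast card_eq_card_filter_true_add_card_filter_false truelabel univ
  rw [prevAlpha, eq_div_iff hS, sub_mul, div_mul_cancel₀ _ hS, one_mul, hsplit,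
    add_sub_cancel_left]

end Classifiers

theorem agreement_rate_formula_general
    (S : Type) [Fintype S] (truelabel di dj : S → Bool)
    (hα : ∃ s, truelabel s = true) :
    ((univ.filter fun s => di s = dj s).card : ℝ) / (Fintype.card S : ℝ) =
      prevAlpha truelabel *
          (acc truelabel di true * acc truelabel dj true +
            (1 - acc truelabel di true) * (1 - acc truelabel dj true) +
            2 * pairCorr truelabel di dj true) +
        (1 - prevAlpha truelabel) *
          (acc truelabel di false * acc truelabel dj false +
            (1 - acc truelabel di false) * (1 - acc truelabel dj false) +
            2 * pairCorr truelabel di dj false) := by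
  have hS : (Fintype.card S : ℝ) ≠ 0 := by
    obtain ⟨s, -⟩ := hα
    exact_mod_cast (Fintype.card_pos_iff.2 ⟨s⟩).ne'
  rw [one_sub_prevAlpha truelabel hS, prevAlpha, div_mul_eq_mul_div, div_mul_eq_mul_div,
    nLabel_mul_agreement_eq_card, nLabel_mul_agreement_eq_card, ← add_div,
    card_eq_card_filter_true_add_card_filter_false truelabel, Nat.cast_add]

/-- Agreement rate of two arbitrarily correlated binary classifiers:
a_{i,j} = P_α(P_{i,α}P_{j,α} + (1−P_{i,α})(1−P_{j,α}) + 2Γ_{i,j,α})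
        + (1−P_α)(P_{i,β}P_{j,β} + (1−P_{i,β})(1−P_{j,β}) + 2Γ_{i,j,β}). -/
theorem agreement_rate_formula
    (S : Type) [Fintype S] (truelabel di dj : S → Bool)
    (hα : ∃ s, truelabel s = true) (hβ : ∃ s, truelabel s = false) :
    ((univ.filter fun s => di s = dj s).card : ℝ) / (Fintype.card S : ℝ) =
      prevAlpha truelabel *
          (acc truelabel di true * acc truelabel dj true +
            (1 - acc truelabel di true) * (1 - acc truelabel dj true) +
            2 * pairCorr truelabel di dj true) +
        (1 - prevAlpha truelabel) *
          (acc truelabel di false * acc truelabel dj false +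
            (1 - acc truelabel di false) * (1 - acc truelabel dj false) +
            2 * pairCorr truelabel di dj false) :=
  agreement_rate_formula_general S truelabel di dj hα
end

section
/- The map (P_α, P_{i,α}, P_{i,β}) ↦ (1−P_α, 1−P_{i,β}, 1−P_{i,α}) (applied to the prevalence and each classifier's two label accuracies) is an involution that preserves all eight independent-model decision event frequencies of three classifiers. -/
noncomputable section

/-- Independent-model decision-event frequency for a voting pattern `l : Fin 3 → Bool`
(`true` = α, `false` = β), given prevalence `pα` and label accuracies `pa i`, `pb i`. -/
def indepFreq (pα : ℝ) (pa pb : Fin 3 → ℝ) (l : Fin 3 → Bool) : ℝ :=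
  pα * ∏ i, (if l i = true then pa i else 1 - pa i) +
    (1 - pα) * ∏ i, (if l i = true then 1 - pb i else pb i)

/-- The label-swap map (P_α, P_{i,α}, P_{i,β}) ↦ (1−P_α, 1−P_{i,β}, 1−P_{i,α}). -/
def labelSwap (x : ℝ × (Fin 3 → ℝ) × (Fin 3 → ℝ)) : ℝ × (Fin 3 → ℝ) × (Fin 3 → ℝ) :=
  (1 - x.1, fun i => 1 - x.2.2 i, fun i => 1 - x.2.1 i)

end

theorem labelSwap_involutive : Function.Involutive labelSwap := fun x => by
  simp only [labelSwap, sub_sub_cancel]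

/-- The swap exchanges the α-summand and the β-summand of the frequency. -/
theorem indepFreq_labelSwap (pα : ℝ) (pa pb : Fin 3 → ℝ) (l : Fin 3 → Bool) :
    indepFreq (1 - pα) (fun i => 1 - pb i) (fun i => 1 - pa i) l = indepFreq pα pa pb l := by
  simp only [indepFreq, sub_sub_cancel]
  exact add_comm _ _

/-- The label-swap map is an involution and preserves all eight independent-model
decision-event frequencies. -/
theorem labelSwap_involution_and_invariance :
    (∀ x : ℝ × (Fin 3 → ℝ) × (Fin 3 → ℝ), labelSwap (labelSwap x) = x) ∧
    (∀ (pα : ℝ) (pa pb : Fin 3 → ℝ) (l : Fin 3 → Bool),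
      indepFreq (labelSwap (pα, pa, pb)).1 (labelSwap (pα, pa, pb)).2.1
          (labelSwap (pα, pa, pb)).2.2 l = indepFreq pα pa pb l) :=
  ⟨labelSwap_involutive, indepFreq_labelSwap⟩
end

section
/- For arbitrarily correlated pairs of classifiers, Δ_{i,j} = f_{i,j,β} − f_{i,β}f_{j,β} = P_α(1−P_α)(P_{i,α}+P_{i,β}−1)(P_{j,α}+P_{j,β}−1) + P_α·Γ_{i,j,α} + (1−P_α)·Γ_{i,j,β}; consequently if P_{i,α}+P_{i,β} = 1 and P_α·Γ_{i,j,α} + (1−P_α)·Γ_{i,j,β} = 0 then Δ_{i,j} = 0 even when the correlations are nonzero. -/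
/-- For arbitrarily correlated pairs,
Δ_{i,j} = P_α(1−P_α)(P_{i,α}+P_{i,β}−1)(P_{j,α}+P_{j,β}−1) + P_α Γ_{i,j,α} + (1−P_α) Γ_{i,j,β};
consequently if P_{i,α}+P_{i,β} = 1 and P_α Γ_{i,j,α} + (1−P_α) Γ_{i,j,β} = 0 then Δ_{i,j} = 0
even when the correlations are nonzero. -/
theorem correlated_delta_identity (pα pia pib pja pjb Γa Γb : ℝ) :
    ((pα * ((1 - pia) * (1 - pja) + Γa) + (1 - pα) * (pib * pjb + Γb)) -
        (pα * (1 - pia) + (1 - pα) * pib) * (pα * (1 - pja) + (1 - pα) * pjb) =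
      pα * (1 - pα) * (pia + pib - 1) * (pja + pjb - 1) + pα * Γa + (1 - pα) * Γb) ∧
    (pia + pib = 1 → pα * Γa + (1 - pα) * Γb = 0 →
      (pα * ((1 - pia) * (1 - pja) + Γa) + (1 - pα) * (pib * pjb + Γb)) -
          (pα * (1 - pia) + (1 - pα) * pib) * (pα * (1 - pja) + (1 - pα) * pjb) = 0) := by
  have delta_eq :
      (pα * ((1 - pia) * (1 - pja) + Γa) + (1 - pα) * (pib * pjb + Γb)) -
          (pα * (1 - pia) + (1 - pα) * pib) * (pα * (1 - pja) + (1 - pα) * pjb) =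
        pα * (1 - pα) * (pia + pib - 1) * (pja + pjb - 1) + pα * Γa + (1 - pα) * Γb := by
    ring
  refine ⟨delta_eq, fun hi hΓ => ?_⟩
  rw [delta_eq, sub_eq_zero_of_eq hi, add_assoc, hΓ]
  ring
end
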